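/- arXiv:math-ph/0006018 — 4 statements merged into one kernel-verified Lean document; each statement's English description precedes it below -/
import Mathlib

section
/- Let A ∈ SL(2,ℂ). Then A · diag(2,0) · A* = diag(2,0) (where diag(2,0) is the 2×2 matrix [[2,0],[0,0]] and A* is the conjugate transpose) holds if and only if A ∈ E(2). In other words, E(2) is exactly the little group in SL(2,ℂ) of the lightlike reference momentum p̄ = (1,0,0,1), whose associated Hermitian matrix is diag(2,0). -/
/-! `A · diag(2,0) · A*` is `2 u u*` for the first column `u` of `A`, so it equals `diag(2,0)`
exactly when `u = (a, 0)` with `|a| = 1`. -/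

open Matrix

/-- `E(2)`: the little group of the lightlike reference momentum, i.e. matrices
`A ∈ SL(2,ℂ)` with `A₂₁ = 0` and `|A₁₁| = 1`. -/
def E2 : Set (Matrix (Fin 2) (Fin 2) ℂ) :=
  {A | A.det = 1 ∧ A 1 0 = 0 ∧ ‖A 0 0‖ = 1}

open ComplexConjugate

theorem Matrix.mul_single_mul_conjTranspose_apply {m n R : Type*} [Fintype n] [DecidableEq n]
    [NonUnitalSemiring R] [StarRing R] (A : Matrix m n R) (k : n) (c : R) (i j : m) :
    (A * single k k c * Aᴴ) i j = A i k * c * star (A j k) := by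
  rw [mul_apply, Finset.sum_eq_single k
    (fun l _ hl => by rw [mul_single_apply_of_ne (hbj := hl), zero_mul]) (by simp),
    mul_single_apply_same, conjTranspose_apply]

namespace RCLike

variable {𝕜 : Type*} [RCLike 𝕜] {c : 𝕜}

theorem mul_mul_conj_self (z : 𝕜) : z * c * conj z = c * (‖z‖ ^ 2 : ℝ) := by
  rw [mul_right_comm, mul_conj, mul_comm, ofReal_pow]

theorem mul_mul_conj_self_eq_self_iff (hc : c ≠ 0) (z : 𝕜) :
    z * c * conj z = c ↔ ‖z‖ = 1 := by
  rw [mul_mul_conj_self, mul_eq_left₀ hc, ← ofReal_one, ofReal_inj,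
    pow_eq_one_iff_of_nonneg (norm_nonneg z) two_ne_zero]

theorem mul_mul_conj_self_eq_zero_iff (hc : c ≠ 0) (z : 𝕜) :
    z * c * conj z = 0 ↔ z = 0 := by
  simp [hc]

end RCLike

/-- For `A ∈ SL(2,ℂ)`, `A · diag(2,0) · A* = diag(2,0)` iff `A ∈ E(2)`. -/
theorem little_group_of_lightlike_momentum (A : Matrix (Fin 2) (Fin 2) ℂ)
    (hA : A.det = 1) :
    A * !![(2 : ℂ), 0; 0, 0] * Aᴴ = !![(2 : ℂ), 0; 0, 0] ↔ A ∈ E2 := by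
  have hP : !![(2 : ℂ), 0; 0, 0] = single 0 0 2 := by
    ext i j; fin_cases i <;> fin_cases j <;> rfl
  have hAPA (i j : Fin 2) :
      (A * single 0 0 2 * Aᴴ : Matrix (Fin 2) (Fin 2) ℂ) i j = A i 0 * 2 * conj (A j 0) :=
    mul_single_mul_conjTranspose_apply A 0 2 i j
  rw [hP, E2, Set.mem_ofPred_eq, and_iff_right hA]
  constructor
  · intro h
    have ha := hAPA 0 0
    have hc := hAPA 1 1
    rw [h, single_apply_same, eq_comm, RCLike.mul_mul_conj_self_eq_self_iff two_ne_zero] at ha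
    rw [h, single_apply_of_row_ne zero_ne_one, eq_comm,
      RCLike.mul_mul_conj_self_eq_zero_iff two_ne_zero] at hc
    exact ⟨hc, ha⟩
  · rintro ⟨hc, ha⟩
    ext i j
    fin_cases i <;> fin_cases j <;> simp [hAPA, hc]
    exact (RCLike.mul_mul_conj_self_eq_self_iff two_ne_zero _).mpr ha
end

section
/- Let g = [[A,B],[C,D]] ∈ SU(2,2) and Z ∈ T₊. Then CZ+D is invertible, so g·Z = (AZ+B)(CZ+D)⁻¹ is defined, and the imaginary part of g·Z satisfies (g·Z − (g·Z)*)/(2i) = ((CZ+D)*)⁻¹ · ((Z−Z*)/(2i)) · (CZ+D)⁻¹, which is positive definite; hence g·Z ∈ T₊, i.e. the action of SU(2,2) preserves the forward tube. -/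
open Matrix
open scoped ComplexOrder

/-- The 4×4 matrix `ζ` with 2×2 blocks `[[0, −i·1],[i·1, 0]]`. -/
noncomputable def zeta : Matrix (Fin 2 ⊕ Fin 2) (Fin 2 ⊕ Fin 2) ℂ :=
  Matrix.fromBlocks 0 (-Complex.I • (1 : Matrix (Fin 2) (Fin 2) ℂ))
    (Complex.I • (1 : Matrix (Fin 2) (Fin 2) ℂ)) 0

/-- `SU(2,2)`: 4×4 complex matrices with `det g = 1` and `g ζ g* = ζ`. -/
noncomputable def SU22 : Set (Matrix (Fin 2 ⊕ Fin 2) (Fin 2 ⊕ Fin 2) ℂ) :=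
  {g | g.det = 1 ∧ g * zeta * gᴴ = zeta}

/-- The forward tube `T₊`: matrices `Z` with positive definite imaginary part
`(Z − Z*)/(2i)`. -/
noncomputable def Tplus : Set (Matrix (Fin 2) (Fin 2) ℂ) :=
  {Z | ((2 * Complex.I)⁻¹ • (Z - Zᴴ)).PosDef}

/-!
With `X = [Z; 1]` one has `g X = [A Z + B; C Z + D]`. Since `ζ² = 1`, the relation `g ζ gᴴ = ζ`
is equivalent to `gᴴ ζ g = ζ`, so `g` preserves the Hermitian form `Xᴴ ζ X = i (Z − Zᴴ)`; this gives
`(CZ+D)ᴴ (AZ+B) − (AZ+B)ᴴ (CZ+D) = Z − Zᴴ`. Evaluating the quadratic form of this identity on the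
kernel of `CZ+D` shows that `CZ+D` is injective when `Im Z > 0`, and conjugating the identity by
`(CZ+D)⁻¹` exhibits `Im (g·Z)` as a congruence transform of `Im Z`.
-/

namespace Matrix

variable {n R : Type*} [Fintype n] [DecidableEq n]

lemma conjTranspose_mul_mul_eq_of_mul_mul_conjTranspose_eq [CommRing R] [StarRing R]
    {J g : Matrix n n R} (hJ : J * J = 1) (h : g * J * gᴴ = J) : gᴴ * J * g = J := by
  have hright : g * (J * gᴴ * J) = 1 := by simp only [← Matrix.mul_assoc, h, hJ]
  calc gᴴ * J * g = J * (J * gᴴ * J * g) := by simp only [← Matrix.mul_assoc, hJ, Matrix.one_mul]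
    _ = J := by rw [mul_eq_one_comm.mp hright, Matrix.mul_one]

lemma mul_inv_sub_conjTranspose_mul_inv [CommRing R] [StarRing R] {V W : Matrix n n R}
    (hV : IsUnit V) : W * V⁻¹ - (W * V⁻¹)ᴴ = (Vᴴ)⁻¹ * (Vᴴ * W - Wᴴ * V) * V⁻¹ := by
  have hVdet : IsUnit V.det := (isUnit_iff_isUnit_det V).mp hV
  have hVHdet : IsUnit Vᴴ.det := by rw [det_conjTranspose]; exact hVdet.star
  rw [Matrix.mul_sub, Matrix.sub_mul, nonsing_inv_mul_cancel_left _ _ hVHdet,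
    ← Matrix.mul_assoc (Vᴴ)⁻¹, mul_nonsing_inv_cancel_right _ _ hVdet, conjTranspose_mul,
    conjTranspose_nonsing_inv]

lemma isUnit_of_posDef_smul_conjTranspose_mul_sub {V W : Matrix n n ℂ} {c : ℂ}
    (h : (c • (Vᴴ * W - Wᴴ * V)).PosDef) : IsUnit V := by
  rw [← mulVec_injective_iff_isUnit]
  intro x y hxy
  by_contra hne
  have hker : V *ᵥ (x - y) = 0 := by rw [mulVec_sub, hxy, sub_self]
  have hzero : star (x - y) ⬝ᵥ (Vᴴ * W - Wᴴ * V) *ᵥ (x - y) = 0 := by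
    rw [sub_mulVec, ← mulVec_mulVec, ← mulVec_mulVec, hker, mulVec_zero, sub_zero,
      dotProduct_mulVec, ← star_mulVec, hker, star_zero, zero_dotProduct]
  have hpos := h.dotProduct_mulVec_pos (sub_ne_zero.mpr hne)
  rw [smul_mulVec, dotProduct_smul, hzero, smul_zero] at hpos
  exact hpos.false

end Matrix

lemma conjTranspose_fromRows_mul_zeta_mul_fromRows {m : Type*} (P Q : Matrix (Fin 2) m ℂ) :
    (fromRows P Q)ᴴ * zeta * fromRows P Q = Complex.I • (Qᴴ * P - Pᴴ * Q) := by
  rw [conjTranspose_fromRows_eq_fromCols_conjTranspose, zeta, fromCols_mul_fromBlocks,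
    fromCols_mul_fromRows]
  simp [sub_eq_add_neg]

lemma zeta_mul_zeta : zeta * zeta = 1 := by
  simp [zeta, fromBlocks_multiply, smul_smul, Complex.I_mul_I, ← fromBlocks_one]

lemma conjTranspose_mul_sub_of_mem_SU22 {A B C D : Matrix (Fin 2) (Fin 2) ℂ}
    (hg : fromBlocks A B C D ∈ SU22) (Z : Matrix (Fin 2) (Fin 2) ℂ) :
    (C * Z + D)ᴴ * (A * Z + B) - (A * Z + B)ᴴ * (C * Z + D) = Z - Zᴴ := by
  set g := fromBlocks A B C D
  set X : Matrix (Fin 2 ⊕ Fin 2) (Fin 2) ℂ := fromRows Z 1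
  have hform : gᴴ * zeta * g = zeta :=
    conjTranspose_mul_mul_eq_of_mul_mul_conjTranspose_eq zeta_mul_zeta hg.2
  refine smul_right_injective _ Complex.I_ne_zero ?_
  calc Complex.I • ((C * Z + D)ᴴ * (A * Z + B) - (A * Z + B)ᴴ * (C * Z + D))
      = (g * X)ᴴ * zeta * (g * X) := by
        rw [fromBlocks_mul_fromRows, Matrix.mul_one, Matrix.mul_one,
          conjTranspose_fromRows_mul_zeta_mul_fromRows]
    _ = Xᴴ * (gᴴ * zeta * g) * X := by simp only [conjTranspose_mul, Matrix.mul_assoc]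
    _ = Complex.I • (Z - Zᴴ) := by
        rw [hform, conjTranspose_fromRows_mul_zeta_mul_fromRows, conjTranspose_one,
          Matrix.one_mul, Matrix.mul_one]

/-- For `g = [[A,B],[C,D]] ∈ SU(2,2)` and `Z ∈ T₊`: `CZ+D` is invertible, the imaginary
part of `g·Z = (AZ+B)(CZ+D)⁻¹` is `((CZ+D)*)⁻¹ ((Z−Z*)/(2i)) (CZ+D)⁻¹`, and `g·Z ∈ T₊`:
the action of `SU(2,2)` preserves the forward tube. -/
theorem su22_preserves_forward_tube (A B C D Z : Matrix (Fin 2) (Fin 2) ℂ)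
    (hg : Matrix.fromBlocks A B C D ∈ SU22) (hZ : Z ∈ Tplus) :
    IsUnit (C * Z + D) ∧
    (2 * Complex.I)⁻¹ •
        ((A * Z + B) * (C * Z + D)⁻¹ - ((A * Z + B) * (C * Z + D)⁻¹)ᴴ)
      = ((C * Z + D)ᴴ)⁻¹ * ((2 * Complex.I)⁻¹ • (Z - Zᴴ)) * (C * Z + D)⁻¹ ∧
    (((C * Z + D)ᴴ)⁻¹ * ((2 * Complex.I)⁻¹ • (Z - Zᴴ)) * (C * Z + D)⁻¹).PosDef ∧
    (A * Z + B) * (C * Z + D)⁻¹ ∈ Tplus := by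
  set V := C * Z + D
  set W := A * Z + B
  have hkey : Vᴴ * W - Wᴴ * V = Z - Zᴴ := conjTranspose_mul_sub_of_mem_SU22 hg Z
  have hV : IsUnit V :=
    isUnit_of_posDef_smul_conjTranspose_mul_sub (W := W) (c := (2 * Complex.I)⁻¹) (hkey ▸ hZ)
  have him : (2 * Complex.I)⁻¹ • (W * V⁻¹ - (W * V⁻¹)ᴴ)
      = (Vᴴ)⁻¹ * ((2 * Complex.I)⁻¹ • (Z - Zᴴ)) * V⁻¹ := by
    rw [mul_inv_sub_conjTranspose_mul_inv hV, hkey, Matrix.mul_smul, Matrix.smul_mul]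
  have hpos : ((Vᴴ)⁻¹ * ((2 * Complex.I)⁻¹ • (Z - Zᴴ)) * V⁻¹).PosDef := by
    rw [← conjTranspose_nonsing_inv]
    exact hZ.conjTranspose_mul_mul_same
      (mulVec_injective_iff_isUnit.mpr (isUnit_nonsing_inv_iff.mpr hV))
  exact ⟨hV, him, hpos, show PosDef _ from him ▸ hpos⟩
end

section
/- For A ∈ SL(2,ℂ) and Hermitian B ∈ Mat₂(ℂ), define the 4×4 block matrix φ(A,B) := [[A, B(A*)⁻¹],[0, (A*)⁻¹]]. Then: (i) φ(A,B) ∈ SU(2,2); (ii) φ(A₁,B₁)·φ(A₂,B₂) = φ(A₁A₂, B₁ + A₁B₂A₁*) for all A₁,A₂ ∈ SL(2,ℂ) and Hermitian B₁,B₂; (iii) φ is injective. Hence φ realizes the (covering of the) Poincaré group, the semidirect product of SL(2,ℂ) with the Hermitian 2×2 matrices, as a subgroup of SU(2,2). -/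
open Matrix

/-- The embedding of the (covering of the) Poincaré group into 4×4 matrices:
`φ(A,B) = [[A, B(A*)⁻¹],[0, (A*)⁻¹]]`. -/
noncomputable def phi (A B : Matrix (Fin 2) (Fin 2) ℂ) :
    Matrix (Fin 2 ⊕ Fin 2) (Fin 2 ⊕ Fin 2) ℂ :=
  Matrix.fromBlocks A (B * (Aᴴ)⁻¹) 0 ((Aᴴ)⁻¹)

/-- For `A ∈ SL(2,ℂ)` and Hermitian `B`, `φ(A,B) ∈ SU(2,2)`; `φ` is a group
homomorphism realizing the semidirect product law; and `φ` is injective. -/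
theorem poincare_embeds_in_su22 :
    (∀ A B : Matrix (Fin 2) (Fin 2) ℂ, A.det = 1 → Bᴴ = B → phi A B ∈ SU22) ∧
    (∀ A₁ A₂ B₁ B₂ : Matrix (Fin 2) (Fin 2) ℂ, A₁.det = 1 → A₂.det = 1 →
      B₁ᴴ = B₁ → B₂ᴴ = B₂ →
      phi A₁ B₁ * phi A₂ B₂ = phi (A₁ * A₂) (B₁ + A₁ * B₂ * A₁ᴴ)) ∧
    (∀ A₁ A₂ B₁ B₂ : Matrix (Fin 2) (Fin 2) ℂ, A₁.det = 1 → A₂.det = 1 →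
      B₁ᴴ = B₁ → B₂ᴴ = B₂ →
      phi A₁ B₁ = phi A₂ B₂ → A₁ = A₂ ∧ B₁ = B₂) := by
  refine ⟨?_, ?_, ?_⟩
  · intro A B hA hB
    have hdAH : (Aᴴ).det = 1 := by rw [det_conjTranspose, hA]; simp
    have hu : IsUnit (Aᴴ).det := by rw [hdAH]; exact isUnit_one
    have huA : IsUnit A.det := by rw [hA]; exact isUnit_one
    have h1 : (Aᴴ)⁻¹ * Aᴴ = 1 := nonsing_inv_mul _ hu
    have h2 : A * A⁻¹ = 1 := mul_nonsing_inv _ huA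
    have h3 : A * (A⁻¹ * B) = B := by rw [← Matrix.mul_assoc, h2, Matrix.one_mul]
    have h4 : (Aᴴ⁻¹)ᴴ = A⁻¹ := by
      rw [← conjTranspose_nonsing_inv, conjTranspose_conjTranspose]
    have hCH : (B * (Aᴴ)⁻¹)ᴴ = A⁻¹ * B := by
      rw [conjTranspose_mul, h4, hB]
    constructor
    · rw [phi, det_fromBlocks_zero₂₁, det_nonsing_inv, hdAH, hA]; simp
    · rw [phi, zeta, fromBlocks_conjTranspose, hCH, fromBlocks_multiply,
        fromBlocks_multiply]
      simp [Matrix.mul_smul, Matrix.smul_mul, Matrix.mul_assoc, h1, h3, h4, h2]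
  · intro A₁ A₂ B₁ B₂ hA₁ hA₂ hB₁ hB₂
    have hu₁ : IsUnit (A₁ᴴ).det := by
      rw [det_conjTranspose, hA₁]; simp
    have h1 : A₁ᴴ * (A₁ᴴ)⁻¹ = 1 := mul_nonsing_inv _ hu₁
    have h5 : ∀ X : Matrix (Fin 2) (Fin 2) ℂ, A₁ᴴ * ((A₁ᴴ)⁻¹ * X) = X := by
      intro X; rw [← Matrix.mul_assoc, h1, Matrix.one_mul]
    rw [phi, phi, phi, fromBlocks_multiply]
    have e12 : A₁ * (B₂ * A₂ᴴ⁻¹) + B₁ * A₁ᴴ⁻¹ * A₂ᴴ⁻¹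
        = (B₁ + A₁ * B₂ * A₁ᴴ) * ((A₁ * A₂)ᴴ)⁻¹ := by
      simp only [conjTranspose_mul, Matrix.mul_inv_rev, Matrix.add_mul,
        Matrix.mul_assoc, h5]
      rw [add_comm]
    rw [e12]
    simp [conjTranspose_mul, Matrix.mul_inv_rev]
  · intro A₁ A₂ B₁ B₂ hA₁ hA₂ hB₁ hB₂ h
    have hu₁ : IsUnit (A₁ᴴ).det := by rw [det_conjTranspose, hA₁]; simp
    have hA : A₁ = A₂ := by
      have := congrArg Matrix.toBlocks₁₁ h
      simpa [phi, toBlocks_fromBlocks₁₁] using this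
    refine ⟨hA, ?_⟩
    have h12 := congrArg Matrix.toBlocks₁₂ h
    simp only [phi, toBlocks_fromBlocks₁₂, hA] at h12
    have := congrArg (· * A₂ᴴ) h12
    simpa [Matrix.mul_assoc, nonsing_inv_mul _ (hA ▸ hu₁)] using this
end

section
/- (Abstract unitary extension lemma, Lemma 2.2.) Let G be a group acting on a set M, let 𝔥 be a complex Hilbert space, and let H be a finite-dimensional complex inner product space. Suppose K : M × H → 𝔥 is a map whose range has dense linear span in 𝔥, and J : G × M → GL(H) (invertible linear maps on H) satisfies the cocycle identity J(g₁g₂, z) = J(g₁, g₂·z) ∘ J(g₂, z) for all g₁,g₂ ∈ G, z ∈ M. If for all g ∈ G, z₁,z₂ ∈ M, v₁,v₂ ∈ H the inner products satisfy ⟨K(g·z₁, v₁), K(g·z₂, v₂)⟩ = ⟨K(z₁, J(g,z₁)* v₁), K(z₂, J(g,z₂)* v₂)⟩, then there exists a group homomorphism V from G into the group of unitary operators on 𝔥 such that V(g)(K(z,v)) = K(g·z, (J(g,z)⁻¹)* v) for all g ∈ G, z ∈ M, v ∈ H. -/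
/-!
For each `g`, the family `(z, v) ↦ K (g • z) ((J g z)⁻¹)* v` has the same Gram matrix as `K`
(this is the hypothesis `hinner` at the vectors `((J g z)⁻¹)* v`) and the same range (it is `K`
precomposed with a bijection of `M × H`). Two families with dense spans and equal Gram matrices
differ by a unique unitary, which is `V g`. The cocycle identity for `J` makes
`(g, z) ↦ ((J g z)⁻¹)*` a cocycle as well, so `V (g₁ * g₂)` and `V g₁ * V g₂` agree on the
dense span of `K`, hence are equal.
-/

open scoped InnerProductSpace

open Submodule Finsupp

theorem Finsupp.denseRange_linearCombination {R E ι : Type*} [Semiring R] [AddCommMonoid E]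
    [Module R E] [TopologicalSpace E] {u : ι → E} (hu : Dense (span R (Set.range u) : Set E)) :
    DenseRange (linearCombination R u) := by
  rwa [DenseRange, ← LinearMap.coe_range, range_linearCombination]

theorem LinearIsometryEquiv.ext_on_range {R E F ι : Type*} [Semiring R]
    [SeminormedAddCommGroup E] [Module R E] [NormedAddCommGroup F] [Module R F]
    {u : ι → E} (hu : Dense (span R (Set.range u) : Set E)) {T S : E ≃ₗᵢ[R] F}
    (h : ∀ i, T (u i) = S (u i)) : T = S := by
  have : (T : E →L[R] F) = S := ContinuousLinearMap.ext_on hu (by rintro _ ⟨i, rfl⟩; exact h i)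
  exact LinearIsometryEquiv.ext fun x => congr($this x)

section InnerProductSpace

variable {𝕜 ι E F : Type*} [RCLike 𝕜]
  [NormedAddCommGroup E] [InnerProductSpace 𝕜 E] [NormedAddCommGroup F] [InnerProductSpace 𝕜 F]

theorem Finsupp.inner_linearCombination_eq_of_inner_eq {u : ι → E} {w : ι → F}
    (h : ∀ i j, ⟪w i, w j⟫_𝕜 = ⟪u i, u j⟫_𝕜) (x y : ι →₀ 𝕜) :
    ⟪linearCombination 𝕜 w x, linearCombination 𝕜 w y⟫_𝕜
      = ⟪linearCombination 𝕜 u x, linearCombination 𝕜 u y⟫_𝕜 := by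
  simp only [linearCombination_apply, Finsupp.sum, sum_inner, inner_sum, inner_smul_left,
    inner_smul_right, h]

theorem exists_linearIsometryEquiv_apply_eq_of_inner_eq [CompleteSpace E] [CompleteSpace F]
    {u : ι → E} {w : ι → F} (hu : Dense (span 𝕜 (Set.range u) : Set E))
    (hw : Dense (span 𝕜 (Set.range w) : Set F)) (h : ∀ i j, ⟪w i, w j⟫_𝕜 = ⟪u i, u j⟫_𝕜) :
    ∃ T : E ≃ₗᵢ[𝕜] F, ∀ i, T (u i) = w i := by
  have hnorm (x : ι →₀ 𝕜) : ‖linearCombination 𝕜 w x‖ = ‖linearCombination 𝕜 u x‖ := by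
    rw [@norm_eq_sqrt_re_inner 𝕜, @norm_eq_sqrt_re_inner 𝕜,
      inner_linearCombination_eq_of_inner_eq h]
  refine ⟨(LinearEquiv.refl 𝕜 (ι →₀ 𝕜)).extendOfIsometry (linearCombination 𝕜 u)
    (linearCombination 𝕜 w) (denseRange_linearCombination hu)
    (denseRange_linearCombination hw) hnorm, fun i => ?_⟩
  have := LinearEquiv.extendOfIsometry_eq (LinearEquiv.refl 𝕜 (ι →₀ 𝕜)) (linearCombination 𝕜 u)
    (linearCombination 𝕜 w) (denseRange_linearCombination hu)
    (denseRange_linearCombination hw) hnorm (single i 1)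
  rwa [LinearEquiv.refl_apply, linearCombination_single, linearCombination_single, one_smul,
    one_smul] at this

end InnerProductSpace

section Adjoint

variable {𝕜 E F G : Type*} [RCLike 𝕜]
  [NormedAddCommGroup E] [InnerProductSpace 𝕜 E] [CompleteSpace E]
  [NormedAddCommGroup F] [InnerProductSpace 𝕜 F] [CompleteSpace F]
  [NormedAddCommGroup G] [InnerProductSpace 𝕜 G] [CompleteSpace G]

open ContinuousLinearMap

theorem ContinuousLinearEquiv.adjoint_apply_adjoint_symm_apply (e : E ≃L[𝕜] F) (x : E) :
    adjoint (e : E →L[𝕜] F) (adjoint (e.symm : F →L[𝕜] E) x) = x := by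
  rw [← comp_apply, ← adjoint_comp, coe_symm_comp_coe, adjoint_id, id_apply]

theorem ContinuousLinearEquiv.adjoint_symm_apply_adjoint_apply (e : E ≃L[𝕜] F) (y : F) :
    adjoint (e.symm : F →L[𝕜] E) (adjoint (e : E →L[𝕜] F) y) = y := by
  rw [← comp_apply, ← adjoint_comp, coe_comp_coe_symm, adjoint_id, id_apply]

theorem ContinuousLinearEquiv.adjoint_symm_eq_comp_of_coe_eq_comp {a : E ≃L[𝕜] G}
    {b : F ≃L[𝕜] G} {c : E ≃L[𝕜] F} (h : (a : E →L[𝕜] G) = (b : F →L[𝕜] G) ∘L (c : E →L[𝕜] F)) :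
    adjoint (a.symm : G →L[𝕜] E)
      = adjoint (b.symm : G →L[𝕜] F) ∘L adjoint (c.symm : F →L[𝕜] E) := by
  have hsymm : a.symm = b.symm.trans c.symm := by
    rw [ContinuousLinearEquiv.coe_injective (h.trans (comp_coe c b))]
    rfl
  rw [← adjoint_comp, comp_coe, hsymm]

theorem range_comp_adjoint_symm_eq {X Γ M : Type*} [Group Γ] [MulAction Γ M]
    (K : M → E → X) (J : Γ → M → (E ≃L[𝕜] E)) (g : Γ) :
    Set.range (fun zv : M × E => K (g • zv.1) (adjoint ((J g zv.1).symm : E →L[𝕜] E) zv.2))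
      = Set.range (fun zv : M × E => K zv.1 zv.2) := by
  have hsurj : Function.Surjective
      fun zv : M × E => (g • zv.1, adjoint ((J g zv.1).symm : E →L[𝕜] E) zv.2) := by
    rintro ⟨z, v⟩
    refine ⟨(g⁻¹ • z, adjoint (J g (g⁻¹ • z) : E →L[𝕜] E) v), ?_⟩
    simp only [smul_inv_smul, ContinuousLinearEquiv.adjoint_symm_apply_adjoint_apply]
  exact hsurj.range_comp (fun zv : M × E => K zv.1 zv.2)

end Adjoint

open ContinuousLinearMap in
/-- Abstract unitary extension lemma: if the maps `K(z,·) : H → 𝔥` span a dense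
subspace of `𝔥`, `J` is a `GL(H)`-valued cocycle on `G × M`, and the inner products
satisfy the covariance relation, then there is a unitary representation `V` of `G`
on `𝔥` with `V(g)K(z,v) = K(g·z, (J(g,z)⁻¹)*v)`. -/
theorem unitary_extension_lemma
    {G M 𝔥 H : Type*} [Group G] [MulAction G M]
    [NormedAddCommGroup 𝔥] [InnerProductSpace ℂ 𝔥] [CompleteSpace 𝔥]
    [NormedAddCommGroup H] [InnerProductSpace ℂ H] [FiniteDimensional ℂ H]
    (K : M → H → 𝔥)
    (hdense : Dense
      (↑(Submodule.span ℂ (Set.range fun zv : M × H => K zv.1 zv.2)) : Set 𝔥))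
    (J : G → M → (H ≃L[ℂ] H))
    (hcocycle : ∀ g₁ g₂ : G, ∀ z : M,
      (J (g₁ * g₂) z : H →L[ℂ] H)
        = (J g₁ (g₂ • z) : H →L[ℂ] H) ∘L (J g₂ z : H →L[ℂ] H))
    (hinner : ∀ g : G, ∀ z₁ z₂ : M, ∀ v₁ v₂ : H,
      ⟪K (g • z₁) v₁, K (g • z₂) v₂⟫_ℂ
        = ⟪K z₁ (ContinuousLinearMap.adjoint (J g z₁ : H →L[ℂ] H) v₁),
            K z₂ (ContinuousLinearMap.adjoint (J g z₂ : H →L[ℂ] H) v₂)⟫_ℂ) :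
    ∃ V : G →* (𝔥 ≃ₗᵢ[ℂ] 𝔥), ∀ (g : G) (z : M) (v : H),
      V g (K z v)
        = K (g • z)
            (ContinuousLinearMap.adjoint ((J g z).symm : H →L[ℂ] H) v) := by
  have hunitary (g : G) : ∃ U : 𝔥 ≃ₗᵢ[ℂ] 𝔥, ∀ zv : M × H,
      U (K zv.1 zv.2) = K (g • zv.1) (adjoint ((J g zv.1).symm : H →L[ℂ] H) zv.2) := by
    refine exists_linearIsometryEquiv_apply_eq_of_inner_eq hdense
      (by rwa [range_comp_adjoint_symm_eq]) fun p q => ?_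
    simpa only [ContinuousLinearEquiv.adjoint_apply_adjoint_symm_apply] using
      hinner g p.1 q.1 (adjoint ((J g p.1).symm : H →L[ℂ] H) p.2)
        (adjoint ((J g q.1).symm : H →L[ℂ] H) q.2)
  choose U hU using hunitary
  refine ⟨MonoidHom.mk' U fun g₁ g₂ => LinearIsometryEquiv.ext_on_range hdense fun zv => ?_,
    fun g z v => hU g (z, v)⟩
  rw [LinearIsometryEquiv.coe_mul, Function.comp_apply, hU, hU, mul_smul,
    ContinuousLinearEquiv.adjoint_symm_eq_comp_of_coe_eq_comp (hcocycle g₁ g₂ zv.1), comp_apply]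
  exact (hU g₁ (_, _)).symm
end
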